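/- arXiv:1801.04549 — 4 statements merged into one kernel-verified Lean document; each statement's English description precedes it below -/
import Mathlib

section
/- Let k₁, k₂ ∈ ℕ, l ∈ ℝ₊^{k₁}, and fix a norm on ℝ^{k₂}. Let f : ℝ^{k₁} → ℝ^{k₂} be a continuous l-homogeneous function such that f(x) = 0 only when x = 0. Then there exists c₂ > 0 such that ‖x‖_l ≤ c₂·‖f(x)‖ for all x ∈ ℝ^{k₁}, where ‖x‖_l = max_i |x_i|^{1/l_i}. -/
open scoped BigOperators

/-- `f` is `l`-homogeneous: `f (a^{l₁} x₁, …, a^{l_{k₁}} x_{k₁}) = a • f x` for all `a ≥ 0`. -/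
def IsLHomogeneous {k₁ k₂ : ℕ} (l : Fin k₁ → ℝ) (f : (Fin k₁ → ℝ) → (Fin k₂ → ℝ)) : Prop :=
  ∀ (x : Fin k₁ → ℝ) (a : ℝ), 0 ≤ a → f (fun i => a ^ (l i) * x i) = a • f x

/-- The quasi-norm `‖x‖_l = max_i |x_i|^{1/l_i}` (as a supremum over `i`). -/
noncomputable def lQuasiNorm {k₁ : ℕ} (l : Fin k₁ → ℝ) (x : Fin k₁ → ℝ) : ℝ :=
  ⨆ i : Fin k₁, |x i| ^ (1 / l i)

/-!
Both `‖·‖_l` and `‖f ·‖` scale by `a` under the dilation `xᵢ ↦ a^{lᵢ} xᵢ`, so every `x ≠ 0` is the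
dilation by `‖x‖_l` of a point `y` of the unit quasi-sphere `{‖y‖_l = 1}`, and it suffices to bound
`‖f‖` from below there. The quasi-sphere is closed and lies in the unit ball of the sup norm, hence is
compact, and `f` does not vanish on it; so `‖f‖ ≥ m > 0` on it and `c₂ = m⁻¹` works.
-/

section lQuasiNorm

variable {k : ℕ} {l : Fin k → ℝ}

theorem lQuasiNorm_dilate (hl : ∀ i, l i ≠ 0) (x : Fin k → ℝ) {a : ℝ} (ha : 0 ≤ a) :
    lQuasiNorm l (fun i => a ^ l i * x i) = a * lQuasiNorm l x := by
  unfold lQuasiNorm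
  rw [Real.mul_iSup_of_nonneg ha]
  congr 1 with i
  rw [abs_mul, abs_of_nonneg (Real.rpow_nonneg ha _), Real.mul_rpow (Real.rpow_nonneg ha _)
    (abs_nonneg _), ← Real.rpow_mul ha, mul_one_div_cancel (hl i), Real.rpow_one]

theorem lQuasiNorm_zero (hl : ∀ i, l i ≠ 0) : lQuasiNorm l 0 = 0 := by
  have h := lQuasiNorm_dilate hl 0 le_rfl
  simp only [Pi.zero_apply, mul_zero, zero_mul] at h
  exact h

theorem rpow_abs_le_lQuasiNorm (x : Fin k → ℝ) (i : Fin k) :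
    |x i| ^ (1 / l i) ≤ lQuasiNorm l x :=
  le_ciSup (f := fun i => |x i| ^ (1 / l i)) (Finite.bddAbove_range _) i

theorem lQuasiNorm_pos {x : Fin k → ℝ} (hx : x ≠ 0) : 0 < lQuasiNorm l x := by
  obtain ⟨i, hi⟩ := Function.ne_iff.mp hx
  exact (Real.rpow_pos_of_pos (abs_pos.mpr hi) _).trans_le (rpow_abs_le_lQuasiNorm x i)

theorem continuous_lQuasiNorm (hl : ∀ i, 0 ≤ l i) : Continuous (lQuasiNorm l) := by
  rcases isEmpty_or_nonempty (Fin k) with hk | hk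
  · exact continuous_const.congr fun x => (Real.iSup_of_isEmpty _).symm
  · have h : lQuasiNorm l = fun x => Finset.univ.sup' Finset.univ_nonempty
        (fun i => |x i| ^ (1 / l i)) := by
      ext x
      rw [Finset.sup'_univ_eq_ciSup]
      rfl
    rw [h]
    exact Continuous.finset_sup'_apply _ fun i _ => (continuous_apply i).abs.rpow_const
      fun _ => Or.inr (one_div_nonneg.mpr (hl i))

theorem norm_le_one_of_lQuasiNorm_le_one (hl : ∀ i, 0 < l i) {x : Fin k → ℝ}
    (hx : lQuasiNorm l x ≤ 1) : ‖x‖ ≤ 1 := by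
  refine (pi_norm_le_iff_of_nonneg zero_le_one).mpr fun i => ?_
  rw [Real.norm_eq_abs]
  exact le_of_not_gt fun h => (Real.one_lt_rpow h (one_div_pos.mpr (hl i))).not_ge
    ((rpow_abs_le_lQuasiNorm x i).trans hx)

theorem isCompact_setOf_lQuasiNorm_eq_one (hl : ∀ i, 0 < l i) :
    IsCompact {y : Fin k → ℝ | lQuasiNorm l y = 1} :=
  (isCompact_closedBall 0 1).of_isClosed_subset
    (isClosed_eq (continuous_lQuasiNorm fun i => (hl i).le) continuous_const)
    fun _ hy => mem_closedBall_zero_iff.mpr (norm_le_one_of_lQuasiNorm_le_one hl hy.le)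

theorem exists_lQuasiNorm_eq_one_dilate_eq (hl : ∀ i, 0 < l i) {x : Fin k → ℝ} (hx : x ≠ 0) :
    ∃ y, lQuasiNorm l y = 1 ∧ (fun i => lQuasiNorm l x ^ l i * y i) = x := by
  set q := lQuasiNorm l x
  have hq : 0 < q := lQuasiNorm_pos hx
  refine ⟨fun i => q⁻¹ ^ l i * x i, ?_, ?_⟩
  · rw [lQuasiNorm_dilate (fun i => (hl i).ne') x (inv_nonneg.mpr hq.le), inv_mul_cancel₀ hq.ne']
  · funext i
    rw [← mul_assoc, ← Real.mul_rpow hq.le (inv_nonneg.mpr hq.le), mul_inv_cancel₀ hq.ne',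
      Real.one_rpow, one_mul]

end lQuasiNorm

/-- If `f : ℝ^{k₁} → ℝ^{k₂}` is continuous, `l`-homogeneous (with all `l_i > 0`)
and vanishes only at `0`, then there exists `c₂ > 0` with `‖x‖_l ≤ c₂ · ‖f(x)‖` for all `x`. -/
theorem stmt4 {k₁ k₂ : ℕ} (l : Fin k₁ → ℝ) (hl : ∀ i, 0 < l i)
    (f : (Fin k₁ → ℝ) → (Fin k₂ → ℝ)) (hf : Continuous f) (hhom : IsLHomogeneous l f)
    (hzero : ∀ x : Fin k₁ → ℝ, f x = 0 → x = 0) :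
    ∃ c₂ : ℝ, 0 < c₂ ∧ ∀ x : Fin k₁ → ℝ, lQuasiNorm l x ≤ c₂ * ‖f x‖ := by
  have hl₀ : ∀ i, l i ≠ 0 := fun i => (hl i).ne'
  have hf_ne : ∀ y ∈ {y | lQuasiNorm l y = 1}, 0 < ‖f y‖ := fun y (hy : lQuasiNorm l y = 1) =>
    norm_pos_iff.mpr fun h => by
      rw [hzero y h, lQuasiNorm_zero hl₀] at hy
      exact zero_ne_one hy
  obtain ⟨m, hm, hm_le⟩ :=
    (isCompact_setOf_lQuasiNorm_eq_one hl).exists_forall_le' hf.norm.continuousOn hf_ne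
  refine ⟨m⁻¹, inv_pos.mpr hm, fun x => ?_⟩
  rcases eq_or_ne x 0 with rfl | hx
  · rw [lQuasiNorm_zero hl₀]
    positivity
  obtain ⟨y, hy, hxy⟩ := exists_lQuasiNorm_eq_one_dilate_eq hl hx
  have hq : 0 ≤ lQuasiNorm l x := (lQuasiNorm_pos hx).le
  have hfx : f x = lQuasiNorm l x • f y := (congrArg f hxy).symm.trans (hhom y _ hq)
  rw [le_inv_mul_iff₀ hm, hfx, norm_smul, Real.norm_of_nonneg hq, mul_comm]
  exact mul_le_mul_of_nonneg_left (hm_le y hy) hq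
end

section
/- Let Φ be a root system in a Euclidean space with inner product ⟨·,·⟩, Δ = {α₁,…,α_r} a simple system, and fix i ∈ {1,…,r}. Let γ_i be the sum of all roots λ ∈ Φ whose coefficient of α_i in the expansion over Δ is positive (i.e. λ ≥ α_i). Then there exists d_i > 0 such that ⟨γ_i, α_j⟩ = 0 for all j ≠ i and ⟨γ_i, α_i⟩ > 0; equivalently, γ_i is a positive multiple of the i-th fundamental weight. -/
/-!
Reflections in the simple roots `α j`, `j ≠ i`, change a root only by a multiple of `α j`, so
they preserve the `α i`-coefficient and hence permute the roots `λ ≥ α i`. Their sum `γ` is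
therefore fixed by these reflections, i.e. orthogonal to every `α j` with `j ≠ i`. Writing
`γ = ∑ c k • α k`, this gives `0 < ⟪γ, γ⟫ = c i * ⟪γ, α i⟫`, and `c i > 0` because every summand
has positive `α i`-coefficient.
-/

open scoped RealInnerProductSpace BigOperators

noncomputable def rsRefl {E : Type*} [NormedAddCommGroup E] [InnerProductSpace ℝ E]
    (l x : E) : E :=
  x - (2 * ⟪x, l⟫ / ⟪l, l⟫) • l

variable {E : Type*} [NormedAddCommGroup E] [InnerProductSpace ℝ E]

section Reflection

theorem rsRefl_involutive (a : E) : Function.Involutive (rsRefl a) := by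
  intro x
  by_cases ha : a = 0
  · simp [rsRefl, ha]
  have haa : ⟪a, a⟫ ≠ 0 := inner_self_ne_zero.mpr ha
  unfold rsRefl
  rw [inner_sub_left, real_inner_smul_left]
  field_simp
  module

theorem rsRefl_sum {ι : Type*} (a : E) (S : Finset ι) (f : ι → E) :
    ∑ x ∈ S, rsRefl a (f x) = rsRefl a (∑ x ∈ S, f x) := by
  simp only [rsRefl, Finset.sum_sub_distrib, ← Finset.sum_smul, ← Finset.sum_div, ← Finset.mul_sum,
    ← sum_inner]

theorem rsRefl_eq_self_iff {a : E} (ha : a ≠ 0) (x : E) : rsRefl a x = x ↔ ⟪x, a⟫ = 0 := by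
  simp [rsRefl, ha]

theorem inner_sum_eq_zero_of_mapsTo_rsRefl {a : E} (ha : a ≠ 0) {S : Finset E}
    (hS : ∀ x ∈ S, rsRefl a x ∈ S) : ⟪∑ x ∈ S, x, a⟫ = 0 := by
  rw [← rsRefl_eq_self_iff ha, ← rsRefl_sum]
  exact Finset.sum_nbij' (rsRefl a) (rsRefl a) hS hS (fun x _ => rsRefl_involutive a x)
    (fun x _ => rsRefl_involutive a x) (fun _ _ => rfl)

end Reflection

section Coefficients

variable {r : ℕ} {Φ : Finset E} {α : Fin r → E} {m : E → Fin r → ℤ}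

theorem coeff_eq_of_eq_sum (hli : LinearIndependent ℝ α)
    (hexp : ∀ l ∈ Φ, l = ∑ j, (m l j : ℝ) • α j) {l : E} (hl : l ∈ Φ) {c : Fin r → ℝ}
    (hc : l = ∑ k, c k • α k) (k : Fin r) : (m l k : ℝ) = c k :=
  Fintype.linearIndependent_iffₛ.mp hli _ _ ((hexp l hl).symm.trans hc) k

theorem coeff_simpleRoot_self (hli : LinearIndependent ℝ α)
    (hexp : ∀ l ∈ Φ, l = ∑ j, (m l j : ℝ) • α j) {i : Fin r} (hα : α i ∈ Φ) : m (α i) i = 1 := by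
  have := coeff_eq_of_eq_sum hli hexp hα (c := Pi.single i 1) (by simp [Pi.single_apply]) i
  exact_mod_cast this.trans (Pi.single_eq_same i 1)

theorem coeff_rsRefl_simpleRoot (hli : LinearIndependent ℝ α)
    (hexp : ∀ l ∈ Φ, l = ∑ j, (m l j : ℝ) • α j) {i j : Fin r} (hij : j ≠ i) {l : E}
    (hl : l ∈ Φ) (hrl : rsRefl (α j) l ∈ Φ) : m (rsRefl (α j) l) i = m l i := by
  set t := 2 * ⟪l, α j⟫ / ⟪α j, α j⟫
  have hsum : rsRefl (α j) l = ∑ k, ((m l k : ℝ) - (Pi.single j t : Fin r → ℝ) k) • α k := by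
    rw [rsRefl]
    simp [sub_smul, Finset.sum_sub_distrib, ← hexp l hl, t]
  have := coeff_eq_of_eq_sum hli hexp hrl hsum i
  rw [Pi.single_eq_of_ne' hij, sub_zero] at this
  exact_mod_cast this

end Coefficients

theorem inner_pos_of_inner_eq_zero_of_ne {r : ℕ} {α : Fin r → E} (hli : LinearIndependent ℝ α)
    {γ : E} {c : Fin r → ℝ} (hγ : γ = ∑ k, c k • α k) {i : Fin r} (hci : 0 < c i)
    (horth : ∀ k, k ≠ i → ⟪γ, α k⟫ = 0) : 0 < ⟪γ, α i⟫ := by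
  have hγ0 : γ ≠ 0 := by
    rintro rfl
    have := Fintype.linearIndependent_iffₛ.mp hli c 0 (by simp [← hγ]) i
    simp [this] at hci
  have hγγ : ⟪γ, γ⟫ = c i * ⟪γ, α i⟫ := by
    calc ⟪γ, γ⟫ = ∑ k, c k * ⟪γ, α k⟫ := by
          nth_rw 2 [hγ]
          simp only [inner_sum, real_inner_smul_right]
      _ = c i * ⟪γ, α i⟫ :=
          Finset.sum_eq_single i (fun k _ hk => by rw [horth k hk, mul_zero]) (by simp)
  have : 0 < c i * ⟪γ, α i⟫ := hγγ ▸ real_inner_self_pos.mpr hγ0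
  exact pos_of_mul_pos_right this hci.le

theorem stmt5_general {r : ℕ} (Φ : Finset E)
    (hrefl : ∀ l ∈ Φ, ∀ μ ∈ Φ, rsRefl l μ ∈ Φ)
    (α : Fin r → E) (hα : ∀ i, α i ∈ Φ) (hli : LinearIndependent ℝ α)
    (m : E → Fin r → ℤ)
    (hexp : ∀ l ∈ Φ, l = ∑ j : Fin r, (m l j : ℝ) • α j)
    (i : Fin r) :
    (∀ j : Fin r, j ≠ i → ⟪∑ l ∈ Φ.filter (fun l => 0 < m l i), l, α j⟫ = 0) ∧
      0 < ⟪∑ l ∈ Φ.filter (fun l => 0 < m l i), l, α i⟫ := by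
  set S := Φ.filter (fun l => 0 < m l i)
  have horth : ∀ j, j ≠ i → ⟪∑ l ∈ S, l, α j⟫ = 0 := by
    refine fun j hj => inner_sum_eq_zero_of_mapsTo_rsRefl (hli.ne_zero j) fun l hl => ?_
    obtain ⟨hlΦ, hlpos⟩ := Finset.mem_filter.mp hl
    have hrl := hrefl _ (hα j) l hlΦ
    exact Finset.mem_filter.mpr ⟨hrl, coeff_rsRefl_simpleRoot hli hexp hj hlΦ hrl ▸ hlpos⟩
  refine ⟨horth, inner_pos_of_inner_eq_zero_of_ne hli (c := fun k => ∑ l ∈ S, (m l k : ℝ))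
    ?_ ?_ horth⟩
  · simp only [Finset.sum_smul]
    rw [Finset.sum_comm]
    exact Finset.sum_congr rfl fun l hl => hexp l (Finset.mem_filter.mp hl).1
  · have hαi : α i ∈ S :=
      Finset.mem_filter.mpr ⟨hα i, by simp [coeff_simpleRoot_self hli hexp (hα i)]⟩
    exact Finset.sum_pos (fun l hl => by exact_mod_cast (Finset.mem_filter.mp hl).2) ⟨_, hαi⟩

/-- Let `Φ` be a root system in a Euclidean space with simple system
`α₁, …, α_r` (every root decomposing uniquely as an integer combination of the simple
roots with all coefficients of the same sign).  For a fixed `i`, let `γᵢ` be the sum of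
all roots whose coefficient of `αᵢ` is positive.  Then `⟨γᵢ, α_j⟩ = 0` for `j ≠ i`
and `⟨γᵢ, αᵢ⟩ > 0`; equivalently `γᵢ` is a positive multiple of the `i`-th fundamental
weight. -/
theorem stmt5 {r : ℕ} (Φ : Finset E)
    (h0 : (0 : E) ∉ Φ)
    (hrefl : ∀ l ∈ Φ, ∀ μ ∈ Φ, rsRefl l μ ∈ Φ)
    (hint : ∀ l ∈ Φ, ∀ μ ∈ Φ, ∃ z : ℤ, 2 * ⟪μ, l⟫ / ⟪l, l⟫ = (z : ℝ))
    (α : Fin r → E) (hα : ∀ i, α i ∈ Φ) (hli : LinearIndependent ℝ α)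
    (m : E → Fin r → ℤ)
    (hexp : ∀ l ∈ Φ, l = ∑ j : Fin r, (m l j : ℝ) • α j)
    (hsign : ∀ l ∈ Φ, (∀ j, 0 ≤ m l j) ∨ (∀ j, m l j ≤ 0))
    (i : Fin r) :
    (∀ j : Fin r, j ≠ i → ⟪∑ l ∈ Φ.filter (fun l => 0 < m l i), l, α j⟫ = 0) ∧
      0 < ⟪∑ l ∈ Φ.filter (fun l => 0 < m l i), l, α i⟫ :=
  stmt5_general Φ hrefl α hα hli m hexp i
end

section
/- Let Φ be an irreducible root system of rank 2 in a Euclidean plane with simple system {α₁, α₂} and fundamental weight χ₁ (satisfying ⟨χ₁,α₂⟩ = 0 and ⟨χ₁,α₁⟩ > 0). Then for every element ω of the Weyl group W(Φ) there exist real numbers a, b, not both positive, such that ω(χ₁) = a·χ₁ + b·ω_{α₁}(χ₁), where ω_{α₁} is the reflection in α₁. -/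
/-!
Every root reflection is a product of the simple reflections `s₀ = rsRefl (α 0)` and
`s₁ = rsRefl (α 1)`: a positive root `l` has `⟪l, α i⟫ > 0` for some `i`, and `s_l` is the
conjugate by `s_i` of the reflection in the root `s_i l` of smaller height. So it suffices to
exhibit a set containing `χ₁` that is stable under `s₀` and `s₁`. In the coordinates
`(a, b) ↦ a • χ₁ + b • s₀ χ₁`, `s₀` swaps `a` and `b` while `s₁` acts by
`(a, b) ↦ (a + (k - 2) b, -b)`, where the integer
`k = rsPairing (α 0) (α 1) * rsPairing (α 1) (α 0)` lies in `{1, 2, 3}` by irreducibility and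
the strict Cauchy–Schwarz inequality. For each `k` the orbit of `(1, 0)` is an explicit finite
set with no point in the open positive quadrant.
-/

open scoped RealInnerProductSpace BigOperators

variable {E : Type*} [NormedAddCommGroup E] [InnerProductSpace ℝ E]

open Set Finset

noncomputable def rsPairing (x l : E) : ℝ := 2 * ⟪x, l⟫ / ⟪l, l⟫

lemma rsRefl_apply (l x : E) : rsRefl l x = x - rsPairing x l • l := rfl

lemma rsPairing_add (x y l : E) : rsPairing (x + y) l = rsPairing x l + rsPairing y l := by
  simp only [rsPairing, inner_add_left]; ring

lemma rsPairing_smul (c : ℝ) (x l : E) : rsPairing (c • x) l = c * rsPairing x l := by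
  simp only [rsPairing, real_inner_smul_left]; ring

lemma rsPairing_sub (x y l : E) : rsPairing (x - y) l = rsPairing x l - rsPairing y l := by
  simp only [rsPairing, inner_sub_left]; ring

lemma rsPairing_self {l : E} (hl : l ≠ 0) : rsPairing l l = 2 := by
  simp [rsPairing, hl]

lemma rsRefl_add (l x y : E) : rsRefl l (x + y) = rsRefl l x + rsRefl l y := by
  simp only [rsRefl_apply, rsPairing_add, add_smul]; abel

lemma rsRefl_smul (l : E) (c : ℝ) (x : E) : rsRefl l (c • x) = c • rsRefl l x := by
  simp only [rsRefl_apply, rsPairing_smul, smul_sub, smul_smul]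

lemma rsRefl_sub (l x y : E) : rsRefl l (x - y) = rsRefl l x - rsRefl l y := by
  simp only [rsRefl_apply, rsPairing_sub, sub_smul]; abel

lemma rsRefl_of_inner_eq_zero {l x : E} (h : ⟪x, l⟫ = 0) : rsRefl l x = x := by
  simp [rsRefl, h]

lemma rsRefl_self {l : E} (hl : l ≠ 0) : rsRefl l l = -l := by
  rw [rsRefl_apply, rsPairing_self hl]; module

lemma rsRefl_rsRefl (l x : E) : rsRefl l (rsRefl l x) = x := by
  rcases eq_or_ne l 0 with rfl | hl
  · simp [rsRefl]
  rw [rsRefl_apply l (rsRefl l x), rsRefl_apply l x, rsPairing_sub, rsPairing_smul,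
    rsPairing_self hl]
  module

lemma inner_rsRefl_rsRefl (l x y : E) : ⟪rsRefl l x, rsRefl l y⟫ = ⟪x, y⟫ := by
  rcases eq_or_ne l 0 with rfl | hl
  · simp [rsRefl]
  have : ⟪l, l⟫ ≠ 0 := inner_self_ne_zero.2 hl
  simp only [rsRefl, inner_sub_left, inner_sub_right, real_inner_smul_left,
    real_inner_smul_right, real_inner_comm l y, real_inner_comm l x]
  field_simp
  ring

lemma rsRefl_smul_left {c : ℝ} (hc : c ≠ 0) (l : E) : rsRefl (c • l) = rsRefl l := by
  ext x
  rcases eq_or_ne l 0 with rfl | hl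
  · simp
  have : ⟪l, l⟫ ≠ 0 := inner_self_ne_zero.2 hl
  simp only [rsRefl, real_inner_smul_right, real_inner_smul_left, smul_smul]
  congr 2
  field_simp

lemma rsRefl_neg_left (l : E) : rsRefl (-l) = rsRefl l := by
  simpa using rsRefl_smul_left (c := -1) (by norm_num) l

lemma rsRefl_rsRefl_conj (l v : E) :
    rsRefl (rsRefl l v) = rsRefl l ∘ rsRefl v ∘ rsRefl l := by
  ext x
  have hx : rsPairing (rsRefl l x) v = rsPairing x (rsRefl l v) := by
    simp only [rsPairing, inner_rsRefl_rsRefl]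
    rw [← inner_rsRefl_rsRefl l, rsRefl_rsRefl]
  rw [Function.comp_apply, Function.comp_apply, rsRefl_apply v, rsRefl_sub, rsRefl_smul,
    rsRefl_rsRefl, hx, rsRefl_apply]

-- A crystallographic root system, with neither finiteness nor spanning required.
structure IsRootSet (Φ : Set E) : Prop where
  zero_notMem : (0 : E) ∉ Φ
  rsRefl_mem : ∀ l ∈ Φ, ∀ μ ∈ Φ, rsRefl l μ ∈ Φ
  exists_int : ∀ l ∈ Φ, ∀ μ ∈ Φ, ∃ z : ℤ, rsPairing μ l = z

lemma IsRootSet.ne_zero {Φ : Set E} (hΦ : IsRootSet Φ) {l : E} (hl : l ∈ Φ) : l ≠ 0 :=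
  fun h => hΦ.zero_notMem (h ▸ hl)

structure IsSimpleSystem {ι : Type*} [Fintype ι] (Φ : Set E) (α : ι → E) (m : E → ι → ℤ) :
    Prop where
  mem : ∀ i, α i ∈ Φ
  linearIndependent : LinearIndependent ℝ α
  eq_sum : ∀ l ∈ Φ, l = ∑ j, (m l j : ℝ) • α j
  nonneg_or_nonpos : ∀ l ∈ Φ, (∀ j, 0 ≤ m l j) ∨ ∀ j, m l j ≤ 0

namespace IsSimpleSystem

variable {ι : Type*} [Fintype ι] {Φ : Set E} {α : ι → E} {m : E → ι → ℤ}

lemma coeff_eq (hb : IsSimpleSystem Φ α m) {l : E} (hl : l ∈ Φ) {c : ι → ℝ}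
    (h : l = ∑ j, c j • α j) (j : ι) : (m l j : ℝ) = c j :=
  Fintype.linearIndependent_iffₛ.1 hb.linearIndependent _ _ ((hb.eq_sum l hl).symm.trans h) j

lemma inner_eq_sum (hb : IsSimpleSystem Φ α m) {l : E} (hl : l ∈ Φ) (x : E) :
    ⟪l, x⟫ = ∑ j, (m l j : ℝ) * ⟪α j, x⟫ := by
  conv_lhs => rw [hb.eq_sum l hl]
  simp only [sum_inner, real_inner_smul_left]

lemma eq_smul_of_coeff_eq_zero (hb : IsSimpleSystem Φ α m) {l : E} (hl : l ∈ Φ) {i : ι}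
    (h : ∀ j, j ≠ i → m l j = 0) : l = (m l i : ℝ) • α i := by
  conv_lhs => rw [hb.eq_sum l hl]
  exact Finset.sum_eq_single_of_mem i (mem_univ i) fun j _ hj => by simp [h j hj]

lemma exists_inner_pos (hΦ : IsRootSet Φ) (hb : IsSimpleSystem Φ α m) {l : E} (hl : l ∈ Φ)
    (hpos : ∀ j, 0 ≤ m l j) : ∃ i, 0 < ⟪l, α i⟫ := by
  have hll : 0 < ∑ j, (m l j : ℝ) * ⟪α j, l⟫ := by
    rw [← hb.inner_eq_sum hl]
    exact real_inner_self_pos.2 (hΦ.ne_zero hl)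
  obtain ⟨i, -, hi⟩ := exists_lt_of_sum_lt (by simpa using hll : ∑ _j : ι, (0 : ℝ) < _)
  exact ⟨i, real_inner_comm l (α i) ▸ pos_of_mul_pos_right hi (by exact_mod_cast hpos i)⟩

variable [DecidableEq ι]

lemma coeff_simple (hb : IsSimpleSystem Φ α m) (i j : ι) :
    m (α i) j = if j = i then 1 else 0 := by
  have := hb.coeff_eq (hb.mem i) (c := fun j => if j = i then 1 else 0) (by simp) j
  split_ifs at this ⊢ <;> exact_mod_cast this

lemma coeff_rsRefl (hb : IsSimpleSystem Φ α m) {l : E} (hl : l ∈ Φ) {i : ι}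
    (hl' : rsRefl (α i) l ∈ Φ) {z : ℤ} (hz : rsPairing l (α i) = z) (j : ι) :
    m (rsRefl (α i) l) j = m l j - if j = i then z else 0 := by
  have h : rsRefl (α i) l = ∑ j, ((m l j : ℝ) - if j = i then (z : ℝ) else 0) • α j := by
    simp only [sub_smul, ite_smul, zero_smul, sum_sub_distrib, sum_ite_eq',
      Finset.mem_univ, if_true]
    rw [← hb.eq_sum l hl, rsRefl_apply, hz]
  have := hb.coeff_eq hl' h j
  split_ifs at this ⊢ <;> exact_mod_cast this

lemma rsPairing_nonpos (hΦ : IsRootSet Φ) (hb : IsSimpleSystem Φ α m) {i j : ι} (hij : i ≠ j)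
    {z : ℤ} (hz : rsPairing (α j) (α i) = z) : z ≤ 0 := by
  have hmem := hΦ.rsRefl_mem _ (hb.mem i) _ (hb.mem j)
  have hi := hb.coeff_rsRefl (hb.mem j) hmem hz i
  have hj := hb.coeff_rsRefl (hb.mem j) hmem hz j
  simp only [hb.coeff_simple, if_neg hij, if_neg hij.symm, ↓reduceIte] at hi hj
  rcases hb.nonneg_or_nonpos _ hmem with h | h
  · linarith [h i]
  · linarith [h j]

lemma mapsTo_rsRefl_of_nonneg (hΦ : IsRootSet Φ) (hb : IsSimpleSystem Φ α m) {S : Set E}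
    (hS : ∀ i, MapsTo (rsRefl (α i)) S S) (n : ℕ) :
    ∀ l ∈ Φ, (∀ j, 0 ≤ m l j) → ∑ j, m l j ≤ n → MapsTo (rsRefl l) S S := by
  induction n with
  | zero =>
    intro l hl hpos hsum
    have hzero : ∀ j, m l j = 0 := fun j => le_antisymm
      ((single_le_sum (fun j _ => hpos j) (mem_univ j)).trans (by exact_mod_cast hsum)) (hpos j)
    exact (hΦ.ne_zero hl (by simpa [hzero] using hb.eq_sum l hl)).elim
  | succ n ih =>
    intro l hl hpos hsum
    obtain ⟨i, hi⟩ := hb.exists_inner_pos hΦ hl hpos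
    obtain ⟨z, hz⟩ := hΦ.exists_int _ (hb.mem i) _ hl
    have hz_pos : 0 < z := by
      have : (0 : ℝ) < z :=
        hz ▸ div_pos (by linarith) (real_inner_self_pos.2 (hΦ.ne_zero (hb.mem i)))
      exact_mod_cast this
    have hl' := hΦ.rsRefl_mem _ (hb.mem i) _ hl
    have hcoeff := hb.coeff_rsRefl hl hl' hz
    rcases hb.nonneg_or_nonpos _ hl' with hpos' | hneg'
    · have hsum' : ∑ j, m (rsRefl (α i) l) j ≤ n := by
        simp only [hcoeff, sum_sub_distrib, sum_ite_eq', Finset.mem_univ, if_true]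
        push_cast at hsum
        omega
      rw [← rsRefl_rsRefl (α i) l, rsRefl_rsRefl_conj]
      exact (hS i).comp ((ih _ hl' hpos' hsum').comp (hS i))
    · have hl_eq : l = (m l i : ℝ) • α i := hb.eq_smul_of_coeff_eq_zero hl fun j hj =>
        le_antisymm (by simpa [hcoeff, hj] using hneg' j) (hpos j)
      have hmi : (m l i : ℝ) ≠ 0 := fun h => hΦ.ne_zero hl (by rwa [h, zero_smul] at hl_eq)
      rw [hl_eq, rsRefl_smul_left hmi]
      exact hS i

lemma mapsTo_rsRefl (hΦ : IsRootSet Φ) (hb : IsSimpleSystem Φ α m) {S : Set E}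
    (hS : ∀ i, MapsTo (rsRefl (α i)) S S) {l : E} (hl : l ∈ Φ) : MapsTo (rsRefl l) S S := by
  rcases hb.nonneg_or_nonpos l hl with hpos | hneg
  · exact hb.mapsTo_rsRefl_of_nonneg hΦ hS _ l hl hpos (Int.self_le_toNat _)
  · have hnegl : -l ∈ Φ := rsRefl_self (hΦ.ne_zero hl) ▸ hΦ.rsRefl_mem l hl l hl
    have hcoeff : ∀ j, m (-l) j = -m l j := fun j => by
      have := hb.coeff_eq hnegl (c := fun j => -(m l j : ℝ)) (by
        conv_lhs => rw [hb.eq_sum l hl]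
        simp [neg_smul, sum_neg_distrib])
      exact_mod_cast this j
    rw [← rsRefl_neg_left]
    exact hb.mapsTo_rsRefl_of_nonneg hΦ hS _ (-l) hnegl
      (fun j => by linarith [hcoeff j, hneg j]) (Int.self_le_toNat _)

end IsSimpleSystem

def weylMonoid (Φ : Set E) : Submonoid (Function.End E) :=
  Submonoid.closure {f | ∃ l ∈ Φ, f = rsRefl l}

lemma mapsTo_of_mem_weylMonoid {Φ S : Set E} (hS : ∀ l ∈ Φ, MapsTo (rsRefl l) S S)
    {w : Function.End E} (hw : w ∈ weylMonoid Φ) : MapsTo w S S := by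
  induction hw using Submonoid.closure_induction with
  | mem f hf => obtain ⟨l, hl, rfl⟩ := hf; exact hS l hl
  | one => exact mapsTo_id S
  | mul f g _ _ hf hg => exact hf.comp hg

-- Coordinates of the Weyl orbit of `χ₁` in types `A₂`, `B₂`, `G₂` (`k = 1, 2, 3`).
lemma exists_orbit_coords {k : ℤ} (hk₁ : 1 ≤ k) (hk₃ : k ≤ 3) :
    ∃ L : Finset (ℤ × ℤ), (1, 0) ∈ L ∧ (∀ p ∈ L, p.swap ∈ L) ∧
      (∀ p ∈ L, (p.1 + (k - 2) * p.2, -p.2) ∈ L) ∧ ∀ p ∈ L, ¬(0 < p.1 ∧ 0 < p.2) := by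
  obtain rfl | rfl | rfl : k = 1 ∨ k = 2 ∨ k = 3 := by omega
  · exact ⟨{(1, 0), (0, 1), (-1, -1)}, by decide⟩
  · exact ⟨{(1, 0), (0, 1), (-1, 0), (0, -1)}, by decide⟩
  · exact ⟨{(1, 0), (0, 1), (1, -1), (-1, 1), (0, -1), (-1, 0)}, by decide⟩

lemma rsPairing_mul_rsPairing_lt_four {x y : E} (h : LinearIndependent ℝ ![x, y]) :
    rsPairing x y * rsPairing y x < 4 := by
  have hx : 0 < ⟪x, x⟫ := real_inner_self_pos.2 (h.ne_zero 0)
  have hy : 0 < ⟪y, y⟫ := real_inner_self_pos.2 (h.ne_zero 1)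
  have hz : ⟪y, y⟫ • x - ⟪x, y⟫ • y ≠ 0 := fun hz =>
    hy.ne' (LinearIndependent.pair_iff.1 h _ (-⟪x, y⟫) (by rw [← hz]; module)).1
  have hzz := real_inner_self_pos.2 hz
  simp only [inner_sub_left, inner_sub_right, real_inner_smul_left, real_inner_smul_right,
    real_inner_comm x y] at hzz
  have hcs : ⟪x, y⟫ * ⟪x, y⟫ < ⟪x, x⟫ * ⟪y, y⟫ := by nlinarith
  rw [rsPairing, rsPairing, real_inner_comm x y, div_mul_div_comm, div_lt_iff₀ (by positivity)]
  nlinarith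

namespace IsSimpleSystem

variable {Φ : Set E} {α : Fin 2 → E} {m : E → Fin 2 → ℤ}

lemma exists_orthogonal_partition (hΦ : IsRootSet Φ) (hb : IsSimpleSystem Φ α m)
    (h : ⟪α 0, α 1⟫ = 0) : ∃ Φ₁ Φ₂ : Set E, Φ₁.Nonempty ∧ Φ₂.Nonempty ∧ Φ₁ ∪ Φ₂ = Φ ∧
      ∀ x ∈ Φ₁, ∀ y ∈ Φ₂, ⟪x, y⟫ = 0 := by
  refine ⟨{l ∈ Φ | m l 1 = 0}, {l ∈ Φ | m l 0 = 0}, ⟨α 0, hb.mem 0, by simp [hb.coeff_simple]⟩,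
    ⟨α 1, hb.mem 1, by simp [hb.coeff_simple]⟩, ?_, ?_⟩
  · refine subset_antisymm (union_subset (sep_subset _ _) (sep_subset _ _)) fun l hl => ?_
    have hz : rsPairing l (α 0) = (2 * m l 0 : ℤ) := by
      have : ⟪α 0, α 0⟫ ≠ 0 := inner_self_ne_zero.2 (hΦ.ne_zero (hb.mem 0))
      rw [rsPairing, hb.inner_eq_sum hl, Fin.sum_univ_two, real_inner_comm (α 0) (α 1), h]
      push_cast
      field_simp
      ring
    have hl' := hΦ.rsRefl_mem _ (hb.mem 0) _ hl
    have h0 := hb.coeff_rsRefl hl hl' hz 0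
    have h1 := hb.coeff_rsRefl hl hl' hz 1
    simp only [↓reduceIte, Fin.one_eq_zero_iff, OfNat.ofNat_ne_one] at h0 h1
    -- `s₀` negates the `α 0`-coordinate and keeps the `α 1`-coordinate; both `l` and `s₀ l`
    -- have coordinates of one sign.
    have hsplit : m l 0 = 0 ∨ m l 1 = 0 := by
      rcases hb.nonneg_or_nonpos l hl with hs | hs <;>
      rcases hb.nonneg_or_nonpos _ hl' with hs' | hs' <;>
      · have := hs 0; have := hs 1; have := hs' 0; have := hs' 1
        omega
    exact hsplit.symm.imp (⟨hl, ·⟩) (⟨hl, ·⟩)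
  · rintro x ⟨hx, hx1⟩ y ⟨hy, hy0⟩
    rw [hb.eq_smul_of_coeff_eq_zero hx (i := 0) fun j hj => by rwa [show j = 1 by omega],
      hb.eq_smul_of_coeff_eq_zero hy (i := 1) fun j hj => by rwa [show j = 0 by omega]]
    simp [real_inner_smul_left, real_inner_smul_right, h]

lemma exists_rsPairing_mul_rsPairing_eq (hΦ : IsRootSet Φ) (hb : IsSimpleSystem Φ α m)
    (hirr : ¬ ∃ Φ₁ Φ₂ : Set E, Φ₁.Nonempty ∧ Φ₂.Nonempty ∧ Φ₁ ∪ Φ₂ = Φ ∧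
      ∀ x ∈ Φ₁, ∀ y ∈ Φ₂, ⟪x, y⟫ = 0) :
    ∃ k : ℤ, 1 ≤ k ∧ k ≤ 3 ∧ rsPairing (α 0) (α 1) * rsPairing (α 1) (α 0) = k := by
  have h01 : ⟪α 0, α 1⟫ ≠ 0 := fun h => hirr (hb.exists_orthogonal_partition hΦ h)
  have hα i := hΦ.ne_zero (hb.mem i)
  obtain ⟨s, hs⟩ := hΦ.exists_int _ (hb.mem 1) _ (hb.mem 0)
  obtain ⟨t, ht⟩ := hΦ.exists_int _ (hb.mem 0) _ (hb.mem 1)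
  have hs_neg : s < 0 := (hb.rsPairing_nonpos hΦ (by decide) hs).lt_of_ne <| by
    rintro rfl
    simp [rsPairing, h01, hα 1] at hs
  have ht_neg : t < 0 := (hb.rsPairing_nonpos hΦ (by decide) ht).lt_of_ne <| by
    rintro rfl
    simp [rsPairing, real_inner_comm (α 0) (α 1), h01, hα 0] at ht
  have hlt : rsPairing (α 0) (α 1) * rsPairing (α 1) (α 0) < 4 :=
    rsPairing_mul_rsPairing_lt_four <| by
      convert hb.linearIndependent
      ext i; fin_cases i <;> rfl
  rw [hs, ht] at hlt ⊢
  refine ⟨s * t, by nlinarith, ?_, by push_cast; rfl⟩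
  have : s * t < 4 := by exact_mod_cast hlt
  omega

end IsSimpleSystem

lemma rsRefl_one_rsRefl_zero {α : Fin 2 → E} (hdim : Module.finrank ℝ E = 2)
    (hli : LinearIndependent ℝ α) {χ : E} (hχ : ⟪χ, α 1⟫ = 0) :
    rsRefl (α 1) (rsRefl (α 0) χ) =
      (rsPairing (α 0) (α 1) * rsPairing (α 1) (α 0) - 2) • χ - rsRefl (α 0) χ := by
  have h0 : ⟪α 0, α 0⟫ ≠ 0 := inner_self_ne_zero.2 (hli.ne_zero 0)
  have h1 : ⟪α 1, α 1⟫ ≠ 0 := inner_self_ne_zero.2 (hli.ne_zero 1)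
  let B := basisOfLinearIndependentOfCardEqFinrank hli (by simp [hdim])
  refine InnerProductSpace.ext_inner_right_basis B (Fin.forall_fin_two.2 ⟨?_, ?_⟩) <;>
  · simp only [B, coe_basisOfLinearIndependentOfCardEqFinrank, rsRefl, rsPairing,
      inner_sub_left, real_inner_smul_left, real_inner_comm (α 0) (α 1), hχ]
    field_simp
    ring

def intCombination (u v : E) (p : ℤ × ℤ) : E := (p.1 : ℝ) • u + (p.2 : ℝ) • v

lemma mapsTo_rsRefl_image_intCombination {α : Fin 2 → E} (hdim : Module.finrank ℝ E = 2)
    (hli : LinearIndependent ℝ α) {χ : E} (hχ : ⟪χ, α 1⟫ = 0) {k : ℤ}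
    (hk : rsPairing (α 0) (α 1) * rsPairing (α 1) (α 0) = k) {L : Finset (ℤ × ℤ)}
    (hswap : ∀ p ∈ L, p.swap ∈ L) (hflip : ∀ p ∈ L, (p.1 + (k - 2) * p.2, -p.2) ∈ L) :
    ∀ i, MapsTo (rsRefl (α i)) (intCombination χ (rsRefl (α 0) χ) '' L)
      (intCombination χ (rsRefl (α 0) χ) '' L) := by
  refine Fin.forall_fin_two.2 ⟨?_, ?_⟩ <;> rintro _ ⟨p, hp, rfl⟩
  · refine ⟨p.swap, hswap p hp, ?_⟩
    simp only [intCombination, Prod.fst_swap, Prod.snd_swap, rsRefl_add, rsRefl_smul,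
      rsRefl_rsRefl]
    exact add_comm _ _
  · refine ⟨_, hflip p hp, ?_⟩
    simp only [intCombination, rsRefl_add, rsRefl_smul, rsRefl_of_inner_eq_zero hχ,
      rsRefl_one_rsRefl_zero hdim hli hχ, hk]
    push_cast
    module

theorem stmt8_general (hdim : Module.finrank ℝ E = 2)
    (Φ : Finset E)
    (h0 : (0 : E) ∉ Φ)
    (hrefl : ∀ l ∈ Φ, ∀ μ ∈ Φ, rsRefl l μ ∈ Φ)
    (hint : ∀ l ∈ Φ, ∀ μ ∈ Φ, ∃ z : ℤ, 2 * ⟪μ, l⟫ / ⟪l, l⟫ = (z : ℝ))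
    (hirr : ¬ ∃ Φ₁ Φ₂ : Set E, Φ₁.Nonempty ∧ Φ₂.Nonempty ∧ Φ₁ ∪ Φ₂ = ↑Φ ∧
      ∀ x ∈ Φ₁, ∀ y ∈ Φ₂, ⟪x, y⟫ = 0)
    (α : Fin 2 → E) (hα : ∀ i, α i ∈ Φ) (hli : LinearIndependent ℝ α)
    (m : E → Fin 2 → ℤ)
    (hexp : ∀ l ∈ Φ, l = ∑ j : Fin 2, (m l j : ℝ) • α j)
    (hsign : ∀ l ∈ Φ, (∀ j, 0 ≤ m l j) ∨ (∀ j, m l j ≤ 0))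
    (χ₁ : E) (hχ₁ : ⟪χ₁, α 1⟫ = 0)
    (w : Function.End E)
    (hw : w ∈ Submonoid.closure {f : Function.End E | ∃ l ∈ Φ, f = rsRefl l}) :
    ∃ a b : ℝ, ¬ (0 < a ∧ 0 < b) ∧ w χ₁ = a • χ₁ + b • rsRefl (α 0) χ₁ := by
  have hΦ : IsRootSet (Φ : Set E) := ⟨h0, hrefl, hint⟩
  have hb : IsSimpleSystem (Φ : Set E) α m := ⟨hα, hli, hexp, hsign⟩
  obtain ⟨k, hk₁, hk₃, hk⟩ := hb.exists_rsPairing_mul_rsPairing_eq hΦ hirr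
  obtain ⟨L, hL, hswap, hflip, hL_not_pos⟩ := exists_orbit_coords hk₁ hk₃
  have hS := mapsTo_rsRefl_image_intCombination hdim hli hχ₁ hk hswap hflip
  have hχ₁S : χ₁ ∈ intCombination χ₁ (rsRefl (α 0) χ₁) '' L :=
    ⟨(1, 0), hL, by simp [intCombination]⟩
  obtain ⟨p, hp, hwp⟩ :=
    mapsTo_of_mem_weylMonoid (fun l hl => hb.mapsTo_rsRefl hΦ hS hl) hw hχ₁S
  exact ⟨p.1, p.2, by exact_mod_cast hL_not_pos p hp, hwp.symm⟩

/-- Let `Φ` be an irreducible rank-2 root system in a Euclidean plane with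
simple system `{α₁, α₂}` and fundamental weight `χ₁` (so `⟪χ₁, α₂⟫ = 0`, `⟪χ₁, α₁⟫ > 0`).
Then for every element `ω` of the Weyl group (the monoid generated by the reflections in
the roots) there exist `a, b`, not both positive, with
`ω(χ₁) = a • χ₁ + b • ω_{α₁}(χ₁)`. -/
theorem stmt8 [FiniteDimensional ℝ E] (hdim : Module.finrank ℝ E = 2)
    (Φ : Finset E)
    (h0 : (0 : E) ∉ Φ)
    (hrefl : ∀ l ∈ Φ, ∀ μ ∈ Φ, rsRefl l μ ∈ Φ)
    (hint : ∀ l ∈ Φ, ∀ μ ∈ Φ, ∃ z : ℤ, 2 * ⟪μ, l⟫ / ⟪l, l⟫ = (z : ℝ))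
    (hirr : ¬ ∃ Φ₁ Φ₂ : Set E, Φ₁.Nonempty ∧ Φ₂.Nonempty ∧ Φ₁ ∪ Φ₂ = ↑Φ ∧
      ∀ x ∈ Φ₁, ∀ y ∈ Φ₂, ⟪x, y⟫ = 0)
    (α : Fin 2 → E) (hα : ∀ i, α i ∈ Φ) (hli : LinearIndependent ℝ α)
    (m : E → Fin 2 → ℤ)
    (hexp : ∀ l ∈ Φ, l = ∑ j : Fin 2, (m l j : ℝ) • α j)
    (hsign : ∀ l ∈ Φ, (∀ j, 0 ≤ m l j) ∨ (∀ j, m l j ≤ 0))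
    (χ₁ : E) (hχ₁ : ⟪χ₁, α 1⟫ = 0) (hχ₁' : 0 < ⟪χ₁, α 0⟫)
    (w : Function.End E)
    (hw : w ∈ Submonoid.closure {f : Function.End E | ∃ l ∈ Φ, f = rsRefl l}) :
    ∃ a b : ℝ, ¬ (0 < a ∧ 0 < b) ∧ w χ₁ = a • χ₁ + b • rsRefl (α 0) χ₁ :=
  stmt8_general hdim Φ h0 hrefl hint hirr α hα hli m hexp hsign χ₁ hχ₁ w hw
end

section
/- Let the unit square I = [0,1]² be covered by two closed sets X₁ and X₂. For i = 1,2 let F_i⁺ and F_i⁻ be the facets of I defined by x_i = 1 and x_i = 0 respectively. Then for some i ∈ {1,2}, some connected component of X_i intersects both F_i⁺ and F_i⁻. -/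
/-!
Suppose no component of `X i` meets both `F_i⁺` and `F_i⁻`. In a compact Hausdorff space the
components are intersections of clopen sets, so `X i` splits into two metric-separated pieces
`C i ⊇ X i ∩ F_i⁺` and `D i ⊇ X i ∩ F_i⁻`. Put an arrow on every point of a fine lattice in the
square, pointing in direction `+eᵢ` on `D i` and `-eᵢ` on `C i`. Arrows at neighbouring lattice
points are never opposite and no arrow on the boundary points outward. Summing the quarter turns
of the arrows around the boundary then gives one full turn, while around every lattice cell the
sum is zero.
-/

open Set Metric ENNReal

namespace Stmt17

section Winding

open Finset

/-- A direction `k : ZMod 4` stands for the unit vector `i ^ k` (right, up, left, down).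
Opposite directions get the junk value `0`. -/
def quarterTurns (p q : ZMod 4) : ℤ :=
  if q = p + 1 then 1 else if q = p - 1 then -1 else 0

def angleFrom (e x : ZMod 4) : ℤ := (x - e).val

lemma quarterTurns_eq_angleFrom_sub : ∀ e p q : ZMod 4, p ≠ e → q ≠ e → q - p ≠ 2 →
    quarterTurns p q = angleFrom e q - angleFrom e p := by decide

lemma angleFrom_add_one : ∀ e x : ZMod 4, x ≠ e → x ≠ e + 1 →
    angleFrom (e + 1) x = angleFrom e x - 1 := by decide

lemma quarterTurns_add_quarterTurns_comm : ∀ p q r s : ZMod 4, q - p ≠ 2 → s - q ≠ 2 →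
    r - p ≠ 2 → s - r ≠ 2 → s - p ≠ 2 → q - r ≠ 2 →
    quarterTurns p q + quarterTurns q s = quarterTurns p r + quarterTurns r s := by decide

lemma sum_quarterTurns (e : ZMod 4) (f : ℕ → ZMod 4) (n : ℕ) (he : ∀ k, f k ≠ e)
    (hf : ∀ k, f (k + 1) - f k ≠ 2) :
    ∑ k ∈ range n, quarterTurns (f k) (f (k + 1)) = angleFrom e (f n) - angleFrom e (f 0) := by
  rw [← sum_range_sub (fun k => angleFrom e (f k))]
  exact sum_congr rfl fun k _ => quarterTurns_eq_angleFrom_sub e _ _ (he k) (he (k + 1)) (hf k)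

lemma sum_range_sum_range_circulation {M : Type*} [AddCommGroup M] (h v : ℕ → ℕ → M) (n : ℕ) :
    ∑ a ∈ range n, ∑ b ∈ range n, (h a b + v (a + 1) b - h a (b + 1) - v a b) =
      ∑ a ∈ range n, (h a 0 - h a n) + ∑ b ∈ range n, (v n b - v 0 b) := by
  have split : ∀ a b, h a b + v (a + 1) b - h a (b + 1) - v a b =
      (h a b - h a (b + 1)) + (v (a + 1) b - v a b) := fun a b => by abel
  rw [sum_congr rfl fun a _ => sum_congr rfl fun b _ => split a b]
  simp only [sum_add_distrib, sum_range_sub']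
  rw [sum_comm]
  exact congrArg _ (sum_congr rfl fun b _ => sum_range_sub (fun a => v a b) n)

structure IsInwardArrowField (n : ℕ) (d : ℕ → ℕ → ZMod 4) : Prop where
  not_opposite : ∀ a b a' b', a' ≤ a + 1 → a ≤ a' + 1 → b' ≤ b + 1 → b ≤ b' + 1 →
    d a' b' - d a b ≠ 2
  left : ∀ b, d 0 b ≠ 2
  right : ∀ b, d n b ≠ 0
  bottom : ∀ a, d a 0 ≠ 3
  top : ∀ a, d a n ≠ 1

theorem not_isInwardArrowField (n : ℕ) (d : ℕ → ℕ → ZMod 4) : ¬ IsInwardArrowField n d := by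
  intro hd
  have hx : ∀ a b, d (a + 1) b - d a b ≠ 2 := fun a b => by apply hd.not_opposite <;> omega
  have hy : ∀ a b, d a (b + 1) - d a b ≠ 2 := fun a b => by apply hd.not_opposite <;> omega
  have hxy : ∀ a b, d (a + 1) (b + 1) - d a b ≠ 2 := fun a b => by
    apply hd.not_opposite <;> omega
  have hyx : ∀ a b, d (a + 1) b - d a (b + 1) ≠ 2 := fun a b => by
    apply hd.not_opposite <;> omega
  have cell : ∀ a b, quarterTurns (d a b) (d (a + 1) b) +
      quarterTurns (d (a + 1) b) (d (a + 1) (b + 1)) -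
      quarterTurns (d a (b + 1)) (d (a + 1) (b + 1)) - quarterTurns (d a b) (d a (b + 1)) = 0 :=
    fun a b => by
      linarith [quarterTurns_add_quarterTurns_comm _ _ _ _ (hx a b) (hy (a + 1) b) (hy a b)
        (hx a (b + 1)) (hxy a b) (hyx a b)]
  have boundary := sum_range_sum_range_circulation
    (fun a b => quarterTurns (d a b) (d (a + 1) b))
    (fun a b => quarterTurns (d a b) (d a (b + 1))) n
  simp only [cell, sum_const_zero, sum_sub_distrib] at boundary
  rw [sum_quarterTurns 3 (fun a => d a 0) n hd.bottom (fun a => hx a 0),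
    sum_quarterTurns 1 (fun a => d a n) n hd.top (fun a => hx a n),
    sum_quarterTurns 0 (fun b => d n b) n hd.right (fun b => hy n b),
    sum_quarterTurns 2 (fun b => d 0 b) n hd.left (fun b => hy 0 b)] at boundary
  -- at each corner the excluded direction advances by a quarter turn: one full turn in total
  have : angleFrom 0 (d n 0) = angleFrom 3 (d n 0) - 1 :=
    angleFrom_add_one 3 _ (hd.bottom n) (hd.right 0)
  have : angleFrom 1 (d n n) = angleFrom 0 (d n n) - 1 :=
    angleFrom_add_one 0 _ (hd.right n) (hd.top n)
  have : angleFrom 2 (d 0 n) = angleFrom 1 (d 0 n) - 1 :=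
    angleFrom_add_one 1 _ (hd.top 0) (hd.left n)
  have : angleFrom 3 (d 0 0) = angleFrom 2 (d 0 0) - 1 :=
    angleFrom_add_one 2 _ (hd.left 0) (hd.bottom 0)
  linarith

end Winding

theorem exists_isClopen_of_disjoint_connectedComponent {X : Type*} [TopologicalSpace X]
    [CompactSpace X] [T2Space X] {A B : Set X} (hA : IsClosed A) (hB : IsClosed B)
    (h : ∀ x ∈ A, Disjoint (connectedComponent x) B) :
    ∃ U, IsClopen U ∧ A ⊆ U ∧ Disjoint U B := by
  let π : X → ConnectedComponents X := ConnectedComponents.mk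
  have hπ : Continuous π := ConnectedComponents.continuous_coe
  have hAB : π '' A ⊆ (π '' B)ᶜ := by
    rintro _ ⟨a, ha, rfl⟩ ⟨b, hb, hba⟩
    exact disjoint_left.1 (h a ha) (ConnectedComponents.coe_eq_coe'.1 hba) hb
  obtain ⟨C, hC, hAC, hCB⟩ := exists_clopen_of_closed_subset_open
    (hA.isCompact.image hπ).isClosed (hB.isCompact.image hπ).isClosed.isOpen_compl hAB
  refine ⟨π ⁻¹' C, hC.preimage hπ, image_subset_iff.1 hAC, disjoint_left.2 fun x hxC hxB => ?_⟩
  exact hCB hxC (mem_image_of_mem π hxB)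

theorem exists_areSeparated_cover_of_connectedComponentIn {α : Type*} [EMetricSpace α]
    {X P M : Set α} (hX : IsCompact X) (hP : IsClosed P) (hM : IsClosed M)
    (h : ∀ x ∈ X, (connectedComponentIn X x ∩ P).Nonempty →
      ¬ (connectedComponentIn X x ∩ M).Nonempty) :
    ∃ C D, X ⊆ C ∪ D ∧ Disjoint C M ∧ Disjoint D P ∧ AreSeparated C D := by
  have := isCompact_iff_compactSpace.1 hX
  obtain ⟨U, hU, hPU, hUM⟩ := exists_isClopen_of_disjoint_connectedComponent
    (hP.preimage continuous_subtype_val) (hM.preimage continuous_subtype_val)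
    fun x hxP => disjoint_left.2 fun y hy hyM => h x x.2 ⟨x, mem_connectedComponentIn x.2, hxP⟩
      ⟨y, connectedComponentIn_eq_image x.2 ▸ mem_image_of_mem _ hy, hyM⟩
  have hUc : IsCompact (((↑) : X → α) '' U) := hU.isClosed.isCompact.image continuous_subtype_val
  have hUc' : IsCompact (((↑) : X → α) '' Uᶜ) :=
    hU.compl.isClosed.isCompact.image continuous_subtype_val
  obtain ⟨r, hr, hsep⟩ := exists_pos_forall_lt_edist hUc hUc'.isClosed
    ((disjoint_image_iff Subtype.val_injective).2 disjoint_compl_right)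
  refine ⟨_, _, ?_, ?_, ?_, ⟨r, by positivity, fun x hx y hy => (hsep x hx y hy).le⟩⟩
  · rw [← image_union, union_compl_self, image_univ, Subtype.range_coe]
  · exact disjoint_left.2 fun _ ⟨y, hyU, hy⟩ hyM => disjoint_left.1 hUM hyU (hy ▸ hyM : y.1 ∈ M)
  · exact disjoint_left.2 fun _ ⟨y, hyU, hy⟩ hyP => hyU (hPU (hy ▸ hyP : y.1 ∈ P))

def facet (i : Fin 2) (c : ℝ) : Set (Fin 2 → ℝ) := {y ∈ Icc 0 1 | y i = c}

lemma isClosed_facet (i : Fin 2) (c : ℝ) : IsClosed (facet i c) :=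
  isClosed_Icc.inter (isClosed_eq (continuous_apply i) continuous_const)

/-- Clamped to the square, so that every `(a, b) : ℕ × ℕ` gets a label. -/
noncomputable def gridPoint (N a b : ℕ) : Fin 2 → ℝ := ![min (a / N) 1, min (b / N) 1]

lemma gridPoint_mem_Icc (N a b : ℕ) : gridPoint N a b ∈ Icc 0 1 := by
  constructor <;> intro j <;> fin_cases j <;> simp [gridPoint] <;> positivity

lemma gridPoint_mem_facet_zero_zero (N b : ℕ) : gridPoint N 0 b ∈ facet 0 0 :=
  ⟨gridPoint_mem_Icc N 0 b, by simp [gridPoint]⟩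

lemma gridPoint_mem_facet_one_zero (N a : ℕ) : gridPoint N a 0 ∈ facet 1 0 :=
  ⟨gridPoint_mem_Icc N a 0, by simp [gridPoint]⟩

lemma gridPoint_mem_facet_zero_one {N : ℕ} (hN : N ≠ 0) (b : ℕ) : gridPoint N N b ∈ facet 0 1 :=
  ⟨gridPoint_mem_Icc N N b, by simp [gridPoint, hN]⟩

lemma gridPoint_mem_facet_one_one {N : ℕ} (hN : N ≠ 0) (a : ℕ) : gridPoint N a N ∈ facet 1 1 :=
  ⟨gridPoint_mem_Icc N a N, by simp [gridPoint, hN]⟩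

lemma abs_min_div_sub_min_div_le {N a a' : ℕ} (h₁ : a' ≤ a + 1) (h₂ : a ≤ a' + 1) :
    |min ((a : ℝ) / N) 1 - min ((a' : ℝ) / N) 1| ≤ 1 / N := by
  have h₁' : (a' : ℝ) ≤ a + 1 := by exact_mod_cast h₁
  have h₂' : (a : ℝ) ≤ a' + 1 := by exact_mod_cast h₂
  calc |min ((a : ℝ) / N) 1 - min ((a' : ℝ) / N) 1|
      ≤ max |(a : ℝ) / N - a' / N| |1 - 1| := abs_min_sub_min_le_max _ _ _ _
    _ = |(a : ℝ) - a'| / N := by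
      rw [sub_self, abs_zero, max_eq_left (abs_nonneg _), ← sub_div, abs_div, Nat.abs_cast]
    _ ≤ 1 / N := by gcongr; exact abs_le.2 ⟨by linarith, by linarith⟩

lemma edist_gridPoint_le {N a b a' b' : ℕ} (ha₁ : a' ≤ a + 1) (ha₂ : a ≤ a' + 1)
    (hb₁ : b' ≤ b + 1) (hb₂ : b ≤ b' + 1) :
    edist (gridPoint N a b) (gridPoint N a' b') ≤ (N : ℝ≥0∞)⁻¹ := by
  rcases Nat.eq_zero_or_pos N with rfl | hN
  · simp
  rw [edist_pi_le_iff]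
  intro j
  rw [edist_dist, Real.dist_eq, ← ENNReal.ofReal_natCast,
    ← ENNReal.ofReal_inv_of_pos (by positivity), inv_eq_one_div]
  apply ENNReal.ofReal_le_ofReal
  fin_cases j
  · exact abs_min_div_sub_min_div_le ha₁ ha₂
  · exact abs_min_div_sub_min_div_le hb₁ hb₂

structure IsInwardCover (S : ZMod 4 → Set (Fin 2 → ℝ)) : Prop where
  cover : Icc 0 1 ⊆ ⋃ k, S k
  separated_horizontal : AreSeparated (S 0) (S 2)
  separated_vertical : AreSeparated (S 1) (S 3)
  right : Disjoint (S 0) (facet 0 1)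
  up : Disjoint (S 1) (facet 1 1)
  left : Disjoint (S 2) (facet 0 0)
  down : Disjoint (S 3) (facet 1 0)

lemma IsInwardCover.exists_forall_le_edist {S : ZMod 4 → Set (Fin 2 → ℝ)}
    (hS : IsInwardCover S) : ∃ r ≠ 0, ∀ k, ∀ x ∈ S k, ∀ y ∈ S (k + 2), r ≤ edist x y := by
  obtain ⟨r₀, hr₀, h₀⟩ := hS.separated_horizontal
  obtain ⟨r₁, hr₁, h₁⟩ := hS.separated_vertical
  refine ⟨min r₀ r₁, (lt_min (pos_iff_ne_zero.2 hr₀) (pos_iff_ne_zero.2 hr₁)).ne', ?_⟩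
  intro k
  fin_cases k <;> intro x hx y hy
  · exact (min_le_left _ _).trans (h₀ x hx y hy)
  · exact (min_le_right _ _).trans (h₁ x hx y hy)
  · exact (min_le_left _ _).trans (edist_comm x y ▸ h₀ y hy x hx)
  · exact (min_le_right _ _).trans (edist_comm x y ▸ h₁ y hy x hx)

theorem not_isInwardCover (S : ZMod 4 → Set (Fin 2 → ℝ)) : ¬ IsInwardCover S := by
  intro hS
  obtain ⟨r, hr, hsep⟩ := hS.exists_forall_le_edist
  obtain ⟨N, hN⟩ := ENNReal.exists_inv_nat_lt hr
  have hN0 : N ≠ 0 := by rintro rfl; simp at hN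
  choose d hd using fun a b => mem_iUnion.1 (hS.cover (gridPoint_mem_Icc N a b))
  refine not_isInwardArrowField N d ⟨fun a b a' b' ha₁ ha₂ hb₁ hb₂ hopp => ?_, fun b h => ?_,
    fun b h => ?_, fun a h => ?_, fun a h => ?_⟩
  · have hfar := hsep (d a b) _ (hd a b) _ (sub_eq_iff_eq_add'.1 hopp ▸ hd a' b')
    exact (hfar.trans (edist_gridPoint_le ha₁ ha₂ hb₁ hb₂)).not_gt hN
  · exact disjoint_left.1 hS.left (h ▸ hd 0 b) (gridPoint_mem_facet_zero_zero N b)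
  · exact disjoint_left.1 hS.right (h ▸ hd N b) (gridPoint_mem_facet_zero_one hN0 b)
  · exact disjoint_left.1 hS.down (h ▸ hd a 0) (gridPoint_mem_facet_one_zero N a)
  · exact disjoint_left.1 hS.up (h ▸ hd a N) (gridPoint_mem_facet_one_one hN0 a)

end Stmt17

/-- Lebesgue: Let the unit square `I = [0,1]²` be covered by two closed sets
`X₁, X₂ ⊆ I`.  Then for some `i ∈ {1,2}`, a connected component of `X_i` intersects both of
the opposite facets `F_i⁺ = {x ∈ I : x_i = 1}` and `F_i⁻ = {x ∈ I : x_i = 0}`. -/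
theorem stmt17 (X : Fin 2 → Set (Fin 2 → ℝ))
    (hclosed : ∀ i, IsClosed (X i))
    (hsub : ∀ i, X i ⊆ Set.Icc 0 1)
    (hcover : Set.Icc (0 : Fin 2 → ℝ) 1 ⊆ X 0 ∪ X 1) :
    ∃ (i : Fin 2) (x : Fin 2 → ℝ), x ∈ X i ∧
      (connectedComponentIn (X i) x ∩ {y ∈ Set.Icc (0 : Fin 2 → ℝ) 1 | y i = 1}).Nonempty ∧
      (connectedComponentIn (X i) x ∩ {y ∈ Set.Icc (0 : Fin 2 → ℝ) 1 | y i = 0}).Nonempty := by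
  by_contra hne
  have hsplit : ∀ i, ∃ C D, X i ⊆ C ∪ D ∧ Disjoint C (Stmt17.facet i 0) ∧
      Disjoint D (Stmt17.facet i 1) ∧ Metric.AreSeparated C D := fun i =>
    Stmt17.exists_areSeparated_cover_of_connectedComponentIn
      (isCompact_Icc.of_isClosed_subset (hclosed i) (hsub i)) (Stmt17.isClosed_facet i 1)
      (Stmt17.isClosed_facet i 0) fun x hx hP hM => hne ⟨i, x, hx, hP, hM⟩
  choose C D hXCD hC hD hCD using hsplit
  refine Stmt17.not_isInwardCover ![D 0, D 1, C 0, C 1]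
    ⟨fun x hx => ?_, (hCD 0).symm, (hCD 1).symm, hD 0, hD 1, hC 0, hC 1⟩
  rcases hcover hx with hx | hx <;> rcases hXCD _ hx with hx | hx
  exacts [mem_iUnion.2 ⟨2, hx⟩, mem_iUnion.2 ⟨0, hx⟩, mem_iUnion.2 ⟨3, hx⟩, mem_iUnion.2 ⟨1, hx⟩]
end
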